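/- Let (e_n) be a normalised unconditional Schauder basis such that every normalised block sequence (x_n) is equivalent to its shift (x_{n+1}). Then whenever (x_i) and (y_i) are normalised block sequences with max(supp x_i ∪ supp y_i) < min(supp x_{i+1} ∪ supp y_{i+1}) for all i, the sequences (x_i) and (y_i) are equivalent. -/

import Mathlib

open Filter Topology

noncomputable section

structure SchauderBasisR (X : Type*) [NormedAddCommGroup X] [NormedSpace ℝ X] where
  e : ℕ → X
  coord : ℕ → X →L[ℝ] ℝ
  biorth : ∀ n m, coord n (e m) = if n = m then 1 else 0
  expansion : ∀ x : X,
    Filter.Tendsto (fun N => ∑ n ∈ Finset.range N, coord n x • e n) Filter.atTop (nhds x)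
  normalised : ∀ n, ‖e n‖ = 1

section Defs

variable {X Y : Type*} [NormedAddCommGroup X] [NormedSpace ℝ X]
  [NormedAddCommGroup Y] [NormedSpace ℝ Y]

/-- Convergence of the series `∑ x n` (of partial sums). -/
def Converges (x : ℕ → X) : Prop :=
  ∃ s, Filter.Tendsto (fun N => ∑ n ∈ Finset.range N, x n) Filter.atTop (nhds s)

/-- Two sequences are equivalent if the same scalar series converge. -/
def SeqEquiv (x : ℕ → X) (y : ℕ → Y) : Prop :=
  ∀ a : ℕ → ℝ, Converges (fun n => a n • x n) ↔ Converges (fun n => a n • y n)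

/-- `C`-equivalence of two sequences. -/
def CEquiv (C : ℝ) (x : ℕ → X) (y : ℕ → Y) : Prop :=
  ∀ (a : ℕ → ℝ) (N : ℕ),
    C⁻¹ * ‖∑ n ∈ Finset.range N, a n • y n‖ ≤ ‖∑ n ∈ Finset.range N, a n • x n‖ ∧
    ‖∑ n ∈ Finset.range N, a n • x n‖ ≤ C * ‖∑ n ∈ Finset.range N, a n • y n‖

/-- A basic sequence: uniformly bounded partial-sum projections. -/
def IsBasicSeq (x : ℕ → X) : Prop :=
  ∃ K, 1 ≤ K ∧ ∀ (a : ℕ → ℝ) (m n : ℕ), m ≤ n →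
    ‖∑ i ∈ Finset.range m, a i • x i‖ ≤ K * ‖∑ i ∈ Finset.range n, a i • x i‖

/-- A sequence of signs. -/
def IsSigns (θ : ℕ → ℝ) : Prop := ∀ n, θ n = 1 ∨ θ n = -1

end Defs

namespace SchauderBasisR

variable {X : Type*} [NormedAddCommGroup X] [NormedSpace ℝ X] (b : SchauderBasisR X)

/-- Support of a vector with respect to the basis. -/
def supp (x : X) : Set ℕ := {n | b.coord n x ≠ 0}

/-- A normalised block sequence of the basis. -/
def IsBlockSeq (x : ℕ → X) : Prop :=
  (∀ n, ‖x n‖ = 1) ∧ (∀ n, (b.supp (x n)).Finite) ∧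
  ∀ n, ∀ i ∈ b.supp (x n), ∀ j ∈ b.supp (x (n+1)), i < j

/-- Unconditionality of the basis. -/
def Unconditional : Prop :=
  ∀ θ : ℕ → ℝ, IsSigns θ → SeqEquiv (fun n => θ n • b.e n) b.e

/-- 1-unconditionality (finite-sum form). -/
def OneUnconditional : Prop :=
  ∀ (θ a : ℕ → ℝ), IsSigns θ → ∀ N,
    ‖∑ n ∈ Finset.range N, (θ n * a n) • b.e n‖ ≤ ‖∑ n ∈ Finset.range N, a n • b.e n‖

/-- The shift property: every normalised block sequence is equivalent to its shift. -/
def ShiftProperty : Prop :=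
  ∀ x : ℕ → X, b.IsBlockSeq x → SeqEquiv x (fun n => x (n+1))

/-- The basis is shrinking. -/
def Shrinking : Prop :=
  ∀ f : X →L[ℝ] ℝ, Filter.Tendsto
    (fun n => sSup ((fun y => |f y|) ''
      {y | y ∈ Submodule.span ℝ (Set.range fun i => b.e (n + i)) ∧ ‖y‖ ≤ 1}))
    Filter.atTop (nhds 0)

/-- The basis is boundedly complete. -/
def BoundedlyComplete : Prop :=
  ∀ a : ℕ → ℝ, (∃ M, ∀ N, ‖∑ i ∈ Finset.range N, a i • b.e i‖ ≤ M) →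
    Converges (fun i => a i • b.e i)

end SchauderBasisR

/-!
Split `∑ aₙ xₙ` into its even and odd parts. Because `x` and `y` are jointly successive, the
interlaced sequence `u = (x₀, y₁, x₂, y₃, …)` is again a normalised block sequence, and on even
indices `u` agrees with `x` while its shift agrees with the shift of `y`; so the shift property,
applied to `u` and to `y`, transfers convergence of the even part from `x` to `y`. The odd part is
handled by `(y₀, x₁, y₂, …)`. Splitting is legitimate because unconditionality of the basis passes
to block sequences: the limit `s` of `∑ aₙ zₙ` has basis expansion `∑ e*ₖ(s) eₖ`, restricting that
expansion to the union of the chosen blocks still converges, and its partial sums at block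
boundaries are the partial sums of the restricted block series.
-/

open Finset

section Converges

variable {X : Type*} [NormedAddCommGroup X]

theorem Converges.add {f g : ℕ → X} (hf : Converges f) (hg : Converges g) :
    Converges fun n => f n + g n := by
  obtain ⟨s, hs⟩ := hf
  obtain ⟨t, ht⟩ := hg
  exact ⟨s + t, by simpa [sum_add_distrib] using hs.add ht⟩

theorem Converges.const_smul [NormedSpace ℝ X] (r : ℝ) {f : ℕ → X} (hf : Converges f) :
    Converges fun n => r • f n := by
  obtain ⟨s, hs⟩ := hf
  exact ⟨r • s, by simpa [← smul_sum] using hs.const_smul r⟩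

end Converges

namespace SchauderBasisR

variable {X : Type*} [NormedAddCommGroup X] [NormedSpace ℝ X] (b : SchauderBasisR X)

theorem notMem_supp {v : X} {k : ℕ} : k ∉ b.supp v ↔ b.coord k v = 0 :=
  not_not

theorem sum_range_coord_smul_eq_self {v : X} {M : ℕ} (hv : b.supp v ⊆ Set.Iio M) :
    ∑ k ∈ range M, b.coord k v • b.e k = v := by
  refine tendsto_nhds_unique (tendsto_atTop_of_eventually_const fun N (hN : M ≤ N) => ?_)
    (b.expansion v)
  refine (sum_subset (range_subset_range.mpr hN) fun k _ hk => ?_).symm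
  rw [(b.notMem_supp).mp fun h => hk (mem_range.mpr (hv h)), zero_smul]

theorem supp_nonempty_of_ne_zero {v : X} (hv : v ≠ 0) : (b.supp v).Nonempty := by
  by_contra h
  refine hv ?_
  rw [← b.sum_range_coord_smul_eq_self (M := 0) fun k hk => (h ⟨k, hk⟩).elim, sum_range_zero]

def partialProj (K : Set ℕ) (M : ℕ) : X →L[ℝ] X :=
  ∑ k ∈ range M, K.indicator (fun k => (b.coord k).smulRight (b.e k)) k

theorem partialProj_apply (K : Set ℕ) (M : ℕ) (v : X) :
    b.partialProj K M v = ∑ k ∈ range M, K.indicator (fun k => b.coord k v • b.e k) k := by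
  simp only [partialProj, FunLike.coe_sum, Finset.sum_apply]
  refine sum_congr rfl fun k _ => ?_
  by_cases hk : k ∈ K <;> simp [hk]

theorem partialProj_eq_self {K : Set ℕ} {M : ℕ} {v : X} (hv : b.supp v ⊆ K ∩ Set.Iio M) :
    b.partialProj K M v = v := by
  rw [partialProj_apply]
  conv_rhs => rw [← b.sum_range_coord_smul_eq_self fun k hk => (hv hk).2]
  refine sum_congr rfl fun k _ => ?_
  by_cases hk : k ∈ K
  · rw [Set.indicator_of_mem hk]
  · rw [Set.indicator_of_notMem hk, (b.notMem_supp).mp fun h => hk (hv h).1, zero_smul]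

theorem partialProj_eq_zero {K : Set ℕ} {M : ℕ} {v : X}
    (hv : Disjoint (b.supp v) (K ∩ Set.Iio M)) : b.partialProj K M v = 0 := by
  rw [partialProj_apply]
  refine sum_eq_zero fun k hk => ?_
  by_cases hkK : k ∈ K
  · rw [Set.indicator_of_mem hkK,
      (b.notMem_supp).mp (hv.notMem_of_mem_right ⟨hkK, mem_range.mp hk⟩), zero_smul]
  · exact Set.indicator_of_notMem hkK _

theorem Unconditional.converges_indicator {b : SchauderBasisR X} (hu : b.Unconditional)
    (K : Set ℕ) {c : ℕ → ℝ} (hc : Converges fun k => c k • b.e k) :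
    Converges fun k => K.indicator (fun k => c k • b.e k) k := by
  classical
  let θ : ℕ → ℝ := fun k => if k ∈ K then 1 else -1
  have hθ : IsSigns θ := fun k => by by_cases hk : k ∈ K <;> simp [θ, hk]
  have hθc : Converges fun k => c k • θ k • b.e k := (hu θ hθ c).mpr hc
  have hsplit : (fun k => K.indicator (fun k => c k • b.e k) k) =
      fun k => (2⁻¹ : ℝ) • (c k • b.e k + c k • θ k • b.e k) := by
    funext k
    by_cases hk : k ∈ K
    · simp only [Set.indicator_of_mem hk, θ, if_pos hk, one_smul]
      rw [← two_smul ℝ (c k • b.e k), smul_smul, inv_mul_cancel₀ two_ne_zero, one_smul]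
    · simp [θ, hk]
  rw [hsplit]
  exact (hc.add hθc).const_smul _

section Blocks

variable {z : ℕ → X} {B : ℕ → ℕ}

theorem partialProj_biUnion_Ico (hB : Monotone B)
    (hz : ∀ n, b.supp (z n) ⊆ Set.Ico (B n) (B (n + 1))) (A : Set ℕ) (N n : ℕ) :
    b.partialProj (⋃ m ∈ A, Set.Ico (B m) (B (m + 1))) (B N) (z n) =
      if n < N then A.indicator z n else 0 := by
  split_ifs with hn
  · by_cases hnA : n ∈ A
    · rw [Set.indicator_of_mem hnA]
      refine b.partialProj_eq_self fun k hk => ⟨Set.mem_biUnion hnA (hz n hk), ?_⟩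
      exact lt_of_lt_of_le (hz n hk).2 (hB hn)
    · rw [Set.indicator_of_notMem hnA]
      refine b.partialProj_eq_zero (Set.disjoint_left.mpr ?_)
      rintro k hk ⟨hkK, -⟩
      obtain ⟨m, hm, hkm⟩ := Set.mem_iUnion₂.mp hkK
      have hmn : m ≠ n := fun h => hnA (h ▸ hm)
      exact Set.disjoint_left.mp (hB.pairwise_disjoint_on_Ico_succ hmn) hkm (hz n hk)
  · refine b.partialProj_eq_zero (Set.disjoint_left.mpr ?_)
    rintro k hk ⟨-, hkN⟩
    exact absurd hkN (not_lt.mpr ((hB (not_lt.mp hn)).trans (hz n hk).1))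

theorem converges_indicator_of_supp_subset_Ico (hu : b.Unconditional) (hB : StrictMono B)
    (hz : ∀ n, b.supp (z n) ⊆ Set.Ico (B n) (B (n + 1))) (A : Set ℕ) {a : ℕ → ℝ}
    (h : Converges fun n => a n • z n) : Converges fun n => A.indicator a n • z n := by
  obtain ⟨s, hs⟩ := h
  set K := ⋃ m ∈ A, Set.Ico (B m) (B (m + 1))
  have hproj_partial : ∀ N L, N ≤ L →
      b.partialProj K (B N) (∑ n ∈ range L, a n • z n) = ∑ n ∈ range N, A.indicator a n • z n := by
    intro N L hNL
    calc b.partialProj K (B N) (∑ n ∈ range L, a n • z n)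
        = ∑ n ∈ range L, a n • b.partialProj K (B N) (z n) := by simp only [map_sum, map_smul]
      _ = ∑ n ∈ range N, a n • b.partialProj K (B N) (z n) := by
          refine (sum_subset (range_subset_range.mpr hNL) fun n _ hn => ?_).symm
          rw [b.partialProj_biUnion_Ico hB.monotone hz, if_neg (by simpa using hn), smul_zero]
      _ = ∑ n ∈ range N, A.indicator a n • z n := by
          refine sum_congr rfl fun n hn => ?_
          rw [b.partialProj_biUnion_Ico hB.monotone hz, if_pos (mem_range.mp hn)]
          by_cases hnA : n ∈ A <;> simp [hnA]
  have hproj_limit : ∀ N, b.partialProj K (B N) s = ∑ n ∈ range N, A.indicator a n • z n :=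
    fun N => tendsto_nhds_unique (((b.partialProj K (B N)).continuous.tendsto s).comp hs)
      (tendsto_atTop_of_eventually_const (hproj_partial N))
  obtain ⟨t, ht⟩ := hu.converges_indicator K ⟨s, b.expansion s⟩
  refine ⟨t, (ht.comp hB.tendsto_atTop).congr fun N => ?_⟩
  rw [← hproj_limit, partialProj_apply]
  rfl

end Blocks

theorem IsBlockSeq.exists_strictMono_supp_subset_Ico {b : SchauderBasisR X} {z : ℕ → X}
    (hz : b.IsBlockSeq z) :
    ∃ B : ℕ → ℕ, StrictMono B ∧ ∀ n, b.supp (z n) ⊆ Set.Ico (B n) (B (n + 1)) := by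
  have hne : ∀ n, (b.supp (z n)).Nonempty := fun n =>
    b.supp_nonempty_of_ne_zero (norm_ne_zero_iff.mp (by rw [hz.1 n]; exact one_ne_zero))
  have hsub : ∀ n, b.supp (z n) ⊆ Set.Ico (sInf (b.supp (z n))) (sInf (b.supp (z (n + 1)))) :=
    fun n k hk => ⟨Nat.sInf_le hk, hz.2.2 n k hk _ (Nat.sInf_mem (hne (n + 1)))⟩
  exact ⟨_, strictMono_nat_of_lt_succ fun n => (hsub n (Nat.sInf_mem (hne n))).2, hsub⟩

theorem IsBlockSeq.converges_indicator {b : SchauderBasisR X} (hu : b.Unconditional)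
    {z : ℕ → X} (hz : b.IsBlockSeq z) (A : Set ℕ) {a : ℕ → ℝ}
    (h : Converges fun n => a n • z n) : Converges fun n => A.indicator a n • z n := by
  obtain ⟨B, hB, hzB⟩ := hz.exists_strictMono_supp_subset_Ico
  exact b.converges_indicator_of_supp_subset_Ico hu hB hzB A h

def JointlySuccessive (x y : ℕ → X) : Prop :=
  ∀ i, ∀ k ∈ b.supp (x i) ∪ b.supp (y i), ∀ l ∈ b.supp (x (i + 1)) ∪ b.supp (y (i + 1)), k < l

theorem JointlySuccessive.symm {b : SchauderBasisR X} {x y : ℕ → X}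
    (h : b.JointlySuccessive x y) : b.JointlySuccessive y x := by
  simpa only [JointlySuccessive, Set.union_comm] using h

theorem supp_piecewise_subset (A : Set ℕ) [∀ j, Decidable (j ∈ A)] (x y : ℕ → X) (n : ℕ) :
    b.supp (A.piecewise x y n) ⊆ b.supp (x n) ∪ b.supp (y n) := by
  by_cases hn : n ∈ A
  · rw [Set.piecewise_eq_of_mem _ _ _ hn]; exact Set.subset_union_left
  · rw [Set.piecewise_eq_of_notMem _ _ _ hn]; exact Set.subset_union_right

theorem IsBlockSeq.piecewise {b : SchauderBasisR X} {x y : ℕ → X} (hx : b.IsBlockSeq x)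
    (hy : b.IsBlockSeq y) (hxy : b.JointlySuccessive x y) (A : Set ℕ) [∀ j, Decidable (j ∈ A)] :
    b.IsBlockSeq (A.piecewise x y) := by
  refine ⟨fun n => ?_, fun n => ?_, fun n k hk l hl =>
    hxy n k (b.supp_piecewise_subset A x y n hk) l (b.supp_piecewise_subset A x y (n + 1) hl)⟩
  · by_cases hn : n ∈ A <;> simp [hn, hx.1 n, hy.1 n]
  · by_cases hn : n ∈ A <;> simp [hn, hx.2.1 n, hy.2.1 n]

theorem ShiftProperty.converges_indicator_of_interlaced {b : SchauderBasisR X}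
    (hshift : b.ShiftProperty) {x y u : ℕ → X} (hy : b.IsBlockSeq y) (hu : b.IsBlockSeq u)
    {A : Set ℕ} (hux : ∀ n ∈ A, u n = x n) (huy : ∀ n ∈ A, u (n + 1) = y (n + 1)) (a : ℕ → ℝ)
    (h : Converges fun n => A.indicator a n • x n) :
    Converges fun n => A.indicator a n • y n := by
  have congr_on : ∀ f g : ℕ → X, (∀ n ∈ A, f n = g n) →
      (fun n => A.indicator a n • f n) = fun n => A.indicator a n • g n := by
    intro f g hfg
    funext n
    by_cases hn : n ∈ A
    · rw [hfg n hn]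
    · simp [Set.indicator_of_notMem hn]
  rw [congr_on x u fun n hn => (hux n hn).symm] at h
  have h' := (hshift u hu _).mp h
  rw [congr_on _ (fun n => y (n + 1)) huy] at h'
  exact (hshift y hy _).mpr h'

theorem converges_indicator_of_jointlySuccessive (hshift : b.ShiftProperty) {x y : ℕ → X}
    (hx : b.IsBlockSeq x) (hy : b.IsBlockSeq y) (hxy : b.JointlySuccessive x y) {A : Set ℕ}
    (hA : ∀ n ∈ A, n + 1 ∉ A) (a : ℕ → ℝ) (h : Converges fun n => A.indicator a n • x n) :
    Converges fun n => A.indicator a n • y n := by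
  classical
  exact hshift.converges_indicator_of_interlaced hy (hx.piecewise hy hxy A)
    (fun n hn => Set.piecewise_eq_of_mem _ _ _ hn)
    (fun n hn => Set.piecewise_eq_of_notMem _ _ _ (hA n hn)) a h

theorem converges_of_jointlySuccessive (hu : b.Unconditional) (hshift : b.ShiftProperty)
    {x y : ℕ → X} (hx : b.IsBlockSeq x) (hy : b.IsBlockSeq y) (hxy : b.JointlySuccessive x y)
    {a : ℕ → ℝ} (h : Converges fun n => a n • x n) : Converges fun n => a n • y n := by
  let E : Set ℕ := {n | Even n}
  have hE : ∀ n ∈ E, n + 1 ∉ E := fun n hn => Nat.not_even_iff_odd.mpr hn.add_one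
  have hEc : ∀ n ∈ Eᶜ, n + 1 ∉ Eᶜ := fun n hn =>
    not_not.mpr (Nat.not_even_iff_odd.mp hn).add_one
  have hy_even := b.converges_indicator_of_jointlySuccessive hshift hx hy hxy hE a
    (hx.converges_indicator hu E h)
  have hy_odd := b.converges_indicator_of_jointlySuccessive hshift hx hy hxy hEc a
    (hx.converges_indicator hu Eᶜ h)
  simpa only [← add_smul, Set.indicator_self_add_compl_apply] using hy_even.add hy_odd

end SchauderBasisR

theorem shift_property_imp_jointly_successive_equivalent_general
    {X : Type*} [NormedAddCommGroup X] [NormedSpace ℝ X]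
    (b : SchauderBasisR X) (hu : b.Unconditional)
    (hshift : b.ShiftProperty) :
    ∀ x y : ℕ → X, b.IsBlockSeq x → b.IsBlockSeq y →
      (∀ i, ∀ k ∈ b.supp (x i) ∪ b.supp (y i),
            ∀ l ∈ b.supp (x (i+1)) ∪ b.supp (y (i+1)), k < l) →
      SeqEquiv x y := by
  intro x y hx hy (hxy : b.JointlySuccessive x y) a
  exact ⟨b.converges_of_jointlySuccessive hu hshift hx hy hxy,
    b.converges_of_jointlySuccessive hu hshift hy hx hxy.symm⟩

theorem shift_property_imp_jointly_successive_equivalent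
    {X : Type*} [NormedAddCommGroup X] [NormedSpace ℝ X] [CompleteSpace X]
    (b : SchauderBasisR X) (hu : b.Unconditional)
    (hshift : b.ShiftProperty) :
    ∀ x y : ℕ → X, b.IsBlockSeq x → b.IsBlockSeq y →
      (∀ i, ∀ k ∈ b.supp (x i) ∪ b.supp (y i),
            ∀ l ∈ b.supp (x (i+1)) ∪ b.supp (y (i+1)), k < l) →
      SeqEquiv x y :=
  shift_property_imp_jointly_successive_equivalent_general b hu hshift
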